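/- arXiv:1402.3236 — 5 statements merged into one kernel-verified Lean document; each statement's English description precedes it below -/
import Mathlib

section
/- Let G be a labeled cuboid graph with iso-level c ∈ (0,1), realized geometrically on a cuboid in ℝ³, and let H be a regular face of G. Then exactly two iso-points lie on the edges of H, and consequently exactly one iso-line lies on H. -/
/-- The eight vertices of the combinatorial 3-cube. -/
abbrev Vtx : Type := Fin 2 × Fin 2 × Fin 2

/-- The `i`-th coordinate of a cube vertex. -/
def coord (i : Fin 3) (p : Vtx) : Fin 2 := ![p.1, p.2.1, p.2.2] i

/-- Number of coordinates in which two vertices differ. -/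
def diffCount (p q : Vtx) : ℕ :=
  (Finset.univ.filter (fun i : Fin 3 => coord i p ≠ coord i q)).card

/-- Two vertices are adjacent if they differ in exactly one coordinate. -/
def Adj (p q : Vtx) : Prop := diffCount p q = 1

/-- Two vertices are diagonal if they differ in exactly two coordinates. -/
def Diag (p q : Vtx) : Prop := diffCount p q = 2

/-- Two vertices are antipodal if they differ in all three coordinates. -/
def Antipodal (p q : Vtx) : Prop := diffCount p q = 3

/-- A face of the cube: the set of four vertices with one fixed coordinate. -/
def IsFace (s : Finset Vtx) : Prop :=
  ∃ (i : Fin 3) (v : Fin 2), s = Finset.univ.filter (fun p => coord i p = v)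

/-- An L-face: a face with exactly two disperse and two continuous vertices
in which the two disperse vertices are not adjacent. -/
def IsLFace (F : Vtx → ℝ) (c : ℝ) (s : Finset Vtx) : Prop :=
  IsFace s ∧ ∃ p q, p ∈ s ∧ q ∈ s ∧ p ≠ q ∧ c < F p ∧ c < F q ∧ ¬ Adj p q ∧
    ∀ r ∈ s, r ≠ p → r ≠ q → F r ≤ c

/-- A trivial L-face: an L-face whose two continuous vertices are both iso-nodes. -/
def IsTrivialLFace (F : Vtx → ℝ) (c : ℝ) (s : Finset Vtx) : Prop :=
  IsLFace F c s ∧ ∀ r ∈ s, F r ≤ c → F r = c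

/-- A singular face: a face with three disperse vertices whose fourth vertex is an iso-node. -/
def IsSingularFace (F : Vtx → ℝ) (c : ℝ) (s : Finset Vtx) : Prop :=
  IsFace s ∧ ∃ p ∈ s, F p = c ∧ ∀ q ∈ s, q ≠ p → c < F q

/-- A regular face: a face that is not an L-face, not a singular face, and has
neither all vertices disperse nor all vertices continuous. -/
def IsRegularFace (F : Vtx → ℝ) (c : ℝ) (s : Finset Vtx) : Prop :=
  IsFace s ∧ ¬ IsLFace F c s ∧ ¬ IsSingularFace F c s ∧
    ¬ (∀ p ∈ s, c < F p) ∧ ¬ (∀ p ∈ s, F p ≤ c)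

/-- `D(G)`: number of disperse vertices. -/
noncomputable def DG (F : Vtx → ℝ) (c : ℝ) : ℕ := Set.ncard {p : Vtx | c < F p}

/-- Regularity of a labeled cuboid graph. -/
def RegularGraph (F : Vtx → ℝ) (c : ℝ) : Prop :=
  (¬ ∀ p, c < F p) ∧ (¬ ∀ p, F p ≤ c) ∧
  (∀ p, F p = c → ¬ ∀ q, Adj p q → c < F q) ∧
  (¬ ∃ p q, Adj p q ∧ F p = c ∧ F q = c ∧
      5 ≤ Set.ncard {r : Vtx | r ≠ p ∧ r ≠ q ∧ c < F r}) ∧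
  (¬ ∃ s : Finset Vtx, IsFace s ∧ (∀ p ∈ s, F p = c) ∧ ∀ p, p ∉ s → c < F p)

/-- An S1-subgraph: a disperse vertex all of whose neighbors are continuous. -/
def IsS1 (F : Vtx → ℝ) (c : ℝ) (p : Vtx) : Prop :=
  c < F p ∧ ∀ q, Adj p q → F q ≤ c

/-- An S2-subgraph: two adjacent disperse vertices whose remaining neighbors are continuous. -/
def IsS2 (F : Vtx → ℝ) (c : ℝ) (p q : Vtx) : Prop :=
  Adj p q ∧ c < F p ∧ c < F q ∧
    (∀ r, Adj p r → r ≠ q → F r ≤ c) ∧ (∀ r, Adj q r → r ≠ p → F r ≤ c)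

/-- An S3-subgraph: a vertex with value `< c` all of whose neighbors are disperse. -/
def IsS3 (F : Vtx → ℝ) (c : ℝ) (p : Vtx) : Prop :=
  F p < c ∧ ∀ q, Adj p q → c < F q

/-- Reducibility of a labeled cuboid graph. -/
def Reducible (F : Vtx → ℝ) (c : ℝ) : Prop :=
  RegularGraph F c ∧
    ((∃ s, IsLFace F c s) ∨ (DG F c = 2 ∧ ∃ p, IsS1 F c p) ∨
      (DG F c = 6 ∧ ∃ p, IsS3 F c p))

/-- Irreducibility of a labeled cuboid graph. -/
def IrreducibleGraph (F : Vtx → ℝ) (c : ℝ) : Prop :=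
  RegularGraph F c ∧ ¬ Reducible F c

/-- Geometric position of a cube vertex on the cuboid `[a₁,b₁]×[a₂,b₂]×[a₃,b₃]`. -/
def vpos (a b : Fin 3 → ℝ) (p : Vtx) : Fin 3 → ℝ :=
  fun i => if coord i p = 0 then a i else b i

/-- `x` is an iso-point on the cuboid edge joining the vertices `p` and `q`. -/
def IsIsoPointOn (F : Vtx → ℝ) (c : ℝ) (a b : Fin 3 → ℝ) (p q : Vtx)
    (x : Fin 3 → ℝ) : Prop :=
  Adj p q ∧ ((F p ≤ c ∧ c < F q) ∨ (F q ≤ c ∧ c < F p)) ∧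
    ∃ t : ℝ, t ∈ Set.Icc (0:ℝ) 1 ∧ x = vpos a b p + t • (vpos a b q - vpos a b p) ∧
      F p + t * (F q - F p) = c

/-- The set of iso-points lying on the edges of the face `s`. -/
def isoPtsOnFace (F : Vtx → ℝ) (c : ℝ) (a b : Fin 3 → ℝ) (s : Finset Vtx) :
    Set (Fin 3 → ℝ) :=
  {x | ∃ p q, p ∈ s ∧ q ∈ s ∧ IsIsoPointOn F c a b p q x}

instance (p q : Vtx) : Decidable (Adj p q) := by unfold Adj; infer_instance

def MixedE (F : Vtx → ℝ) (c : ℝ) (p q : Vtx) : Prop :=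
  (F p ≤ c ∧ c < F q) ∨ (F q ≤ c ∧ c < F p)

lemma MixedE_symm {F : Vtx → ℝ} {c : ℝ} {p q : Vtx} (h : MixedE F c p q) : MixedE F c q p :=
  h.symm

lemma MixedE_ne {F : Vtx → ℝ} {c : ℝ} {p q : Vtx} (h : MixedE F c p q) : F p ≠ F q := by
  rcases h with ⟨h1, h2⟩ | ⟨h1, h2⟩ <;> intro he <;> linarith

lemma not_mixed_le {F : Vtx → ℝ} {c : ℝ} {p q : Vtx} (hp : F p ≤ c) (hq : F q ≤ c) :
    ¬ MixedE F c p q := by rintro (⟨_, h⟩ | ⟨_, h⟩) <;> linarith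

lemma not_mixed_lt {F : Vtx → ℝ} {c : ℝ} {p q : Vtx} (hp : c < F p) (hq : c < F q) :
    ¬ MixedE F c p q := by rintro (⟨h, _⟩ | ⟨h, _⟩) <;> linarith

noncomputable def isoPt (F : Vtx → ℝ) (c : ℝ) (a b : Fin 3 → ℝ) (p q : Vtx) : Fin 3 → ℝ :=
  vpos a b p + ((c - F p) / (F q - F p)) • (vpos a b q - vpos a b p)

lemma isoPt_apply (F : Vtx → ℝ) (c : ℝ) (a b : Fin 3 → ℝ) (p q : Vtx) (j : Fin 3) :
    isoPt F c a b p q j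
      = vpos a b p j + ((c - F p) / (F q - F p)) * (vpos a b q j - vpos a b p j) := rfl

lemma isoPt_symm {F : Vtx → ℝ} {c : ℝ} (a b : Fin 3 → ℝ) {p q : Vtx} (h : F p ≠ F q) :
    isoPt F c a b q p = isoPt F c a b p q := by
  funext j
  rw [isoPt_apply, isoPt_apply]
  have h1 : F q - F p ≠ 0 := sub_ne_zero.mpr (Ne.symm h)
  have h2 : F p - F q ≠ 0 := sub_ne_zero.mpr h
  field_simp
  ring

lemma isoPoint_eq {F : Vtx → ℝ} {c : ℝ} {a b : Fin 3 → ℝ} {p q : Vtx} {x : Fin 3 → ℝ}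
    (h : IsIsoPointOn F c a b p q x) : x = isoPt F c a b p q := by
  obtain ⟨hadj, hmix, t, ht, hx, hteq⟩ := h
  have hne : F q - F p ≠ 0 := by
    intro he
    have h2 := sub_eq_zero.mp he
    rcases hmix with ⟨h3, h4⟩ | ⟨h3, h4⟩ <;> linarith
  have htt : t = (c - F p) / (F q - F p) := by
    rw [eq_div_iff hne]; linarith
  rw [hx, isoPt, htt]

lemma isoPoint_isoPt {F : Vtx → ℝ} {c : ℝ} {a b : Fin 3 → ℝ} {p q : Vtx}
    (hadj : Adj p q) (hm : MixedE F c p q) :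
    IsIsoPointOn F c a b p q (isoPt F c a b p q) := by
  have hne : F q - F p ≠ 0 := sub_ne_zero.mpr (MixedE_ne hm).symm
  have hflip : (c - F p) / (F q - F p) = (F p - c) / (F p - F q) := by
    rw [← neg_div_neg_eq]; ring_nf
  refine ⟨hadj, hm, (c - F p) / (F q - F p), ⟨?_, ?_⟩, rfl, ?_⟩
  · rcases hm with ⟨h1, h2⟩ | ⟨h1, h2⟩
    · exact div_nonneg (by linarith) (by linarith)
    · rw [hflip]; exact div_nonneg (by linarith) (by linarith)
  · rcases hm with ⟨h1, h2⟩ | ⟨h1, h2⟩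
    · rw [div_le_one (by linarith)]; linarith
    · rw [hflip, div_le_one (by linarith)]; linarith
  · rw [div_mul_cancel₀ _ hne]; ring

lemma fin2_cases' : ∀ x : Fin 2, x = 0 ∨ x = 1 := by decide

lemma vpos_eq {a b : Fin 3 → ℝ} {p q : Vtx} {i : Fin 3} (h : coord i p = coord i q) :
    vpos a b p i = vpos a b q i := by simp [vpos, h]

lemma vpos_ne {a b : Fin 3 → ℝ} (hab : ∀ i, a i < b i) {p q : Vtx} {i : Fin 3}
    (h : coord i p ≠ coord i q) : vpos a b p i ≠ vpos a b q i := by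
  unfold vpos
  rcases fin2_cases' (coord i p) with h1 | h1 <;> rcases fin2_cases' (coord i q) with h2 | h2 <;>
    simp [h1, h2] at h ⊢
  · exact ne_of_lt (hab i)
  · exact (ne_of_lt (hab i)).symm

lemma adj_symm' : ∀ p q : Vtx, Adj p q → Adj q p := by decide
lemma adj_irrefl' : ∀ p : Vtx, ¬ Adj p p := by decide
lemma shared_coord : ∀ P Q R : Vtx, Adj P Q → Adj Q R → P ≠ R →
    ∃ j : Fin 3, coord j Q ≠ coord j P ∧ coord j Q = coord j R := by decide
lemma opp_coord : ∀ P Q R S : Vtx, Adj P Q → Adj Q R → Adj S P → P ≠ R → Q ≠ S →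
    ∃ j : Fin 3, coord j P ≠ coord j Q ∧ coord j Q = coord j R ∧ coord j S = coord j P := by decide

lemma mem_iso {F : Vtx → ℝ} {c : ℝ} {a b : Fin 3 → ℝ} {s : Finset Vtx} {P Q R S : Vtx}
    (hmem : ∀ r : Vtx, r ∈ s ↔ r = P ∨ r = Q ∨ r = R ∨ r = S)
    (hPQ : Adj P Q) (hQR : Adj Q R) (hRS : Adj R S) (hSP : Adj S P)
    (hPR : ¬ Adj P R) (hQS : ¬ Adj Q S) (z : Fin 3 → ℝ) :
    z ∈ isoPtsOnFace F c a b s ↔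
      (MixedE F c P Q ∧ z = isoPt F c a b P Q) ∨ (MixedE F c Q R ∧ z = isoPt F c a b Q R) ∨
      (MixedE F c R S ∧ z = isoPt F c a b R S) ∨ (MixedE F c S P ∧ z = isoPt F c a b S P) := by
  constructor
  · rintro ⟨p, q, hp, hq, hiso⟩
    have hadj := hiso.1
    have hmix : MixedE F c p q := hiso.2.1
    have hz := isoPoint_eq hiso
    rcases (hmem p).1 hp with rfl | rfl | rfl | rfl <;>
      rcases (hmem q).1 hq with rfl | rfl | rfl | rfl
    exacts [absurd hadj (adj_irrefl' _),
      Or.inl ⟨hmix, hz⟩,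
      absurd hadj hPR,
      Or.inr (Or.inr (Or.inr ⟨MixedE_symm hmix, hz.trans (isoPt_symm a b (MixedE_ne hmix).symm)⟩)),
      Or.inl ⟨MixedE_symm hmix, hz.trans (isoPt_symm a b (MixedE_ne hmix).symm)⟩,
      absurd hadj (adj_irrefl' _),
      Or.inr (Or.inl ⟨hmix, hz⟩),
      absurd hadj hQS,
      absurd (adj_symm' _ _ hadj) hPR,
      Or.inr (Or.inl ⟨MixedE_symm hmix, hz.trans (isoPt_symm a b (MixedE_ne hmix).symm)⟩),
      absurd hadj (adj_irrefl' _),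
      Or.inr (Or.inr (Or.inl ⟨hmix, hz⟩)),
      Or.inr (Or.inr (Or.inr ⟨hmix, hz⟩)),
      absurd (adj_symm' _ _ hadj) hQS,
      Or.inr (Or.inr (Or.inl ⟨MixedE_symm hmix, hz.trans (isoPt_symm a b (MixedE_ne hmix).symm)⟩)),
      absurd hadj (adj_irrefl' _)]
  · rintro (⟨hm, rfl⟩ | ⟨hm, rfl⟩ | ⟨hm, rfl⟩ | ⟨hm, rfl⟩)
    · exact ⟨P, Q, (hmem P).2 (Or.inl rfl), (hmem Q).2 (Or.inr (Or.inl rfl)),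
        isoPoint_isoPt hPQ hm⟩
    · exact ⟨Q, R, (hmem Q).2 (Or.inr (Or.inl rfl)), (hmem R).2 (Or.inr (Or.inr (Or.inl rfl))),
        isoPoint_isoPt hQR hm⟩
    · exact ⟨R, S, (hmem R).2 (Or.inr (Or.inr (Or.inl rfl))),
        (hmem S).2 (Or.inr (Or.inr (Or.inr rfl))), isoPoint_isoPt hRS hm⟩
    · exact ⟨S, P, (hmem S).2 (Or.inr (Or.inr (Or.inr rfl))), (hmem P).2 (Or.inl rfl),
        isoPoint_isoPt hSP hm⟩

lemma lines_part {T : Set (Fin 3 → ℝ)} {x y : Fin 3 → ℝ} (hxy : x ≠ y) (hT : T = {x, y}) :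
    ∀ L : Set (Fin 3 → ℝ),
      (∃ u v, u ≠ v ∧ u ∈ T ∧ v ∈ T ∧ L = segment ℝ u v) ↔ L = segment ℝ x y := by
  subst hT
  intro L
  constructor
  · rintro ⟨u, v, huv, hu, hv, rfl⟩
    simp only [Set.mem_insert_iff, Set.mem_singleton_iff] at hu hv
    rcases hu with rfl | rfl <;> rcases hv with rfl | rfl
    · exact absurd rfl huv
    · rfl
    · rw [segment_symm]
    · exact absurd rfl huv
  · rintro rfl
    exact ⟨x, y, hxy, Or.inl rfl, Or.inr rfl, rfl⟩

lemma shapeA {F : Vtx → ℝ} {c : ℝ} {a b : Fin 3 → ℝ} (hab : ∀ i, a i < b i)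
    {s : Finset Vtx} {P Q R S : Vtx}
    (hmem : ∀ r : Vtx, r ∈ s ↔ r = P ∨ r = Q ∨ r = R ∨ r = S)
    (hPQ : Adj P Q) (hQR : Adj Q R) (hRS : Adj R S) (hSP : Adj S P)
    (hPR : ¬ Adj P R) (hQS : ¬ Adj Q S) (hPRne : P ≠ R)
    (hm1 : MixedE F c P Q) (hm2 : MixedE F c Q R)
    (hn3 : ¬ MixedE F c R S) (hn4 : ¬ MixedE F c S P)
    (hQc : F Q ≠ c) :
    ∃ x y : Fin 3 → ℝ, x ≠ y ∧ isoPtsOnFace F c a b s = {x, y} ∧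
      ∀ L : Set (Fin 3 → ℝ),
        (∃ u v, u ≠ v ∧ u ∈ isoPtsOnFace F c a b s ∧ v ∈ isoPtsOnFace F c a b s ∧
            L = segment ℝ u v) ↔ L = segment ℝ x y := by
  obtain ⟨j, hj1, hj2⟩ := shared_coord P Q R hPQ hQR hPRne
  have hne1 : F Q - F P ≠ 0 := sub_ne_zero.mpr (MixedE_ne hm1).symm
  have hxy : isoPt F c a b P Q ≠ isoPt F c a b Q R := by
    intro h
    have hyj : isoPt F c a b Q R j = vpos a b Q j := by
      rw [isoPt_apply, ← vpos_eq hj2]; ring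
    have hxj : isoPt F c a b P Q j = vpos a b Q j := by rw [h, hyj]
    rw [isoPt_apply] at hxj
    have ht1 : (c - F P) / (F Q - F P) ≠ 1 := by
      intro h1
      rw [div_eq_one_iff_eq hne1] at h1
      exact hQc (by linarith)
    have hv : vpos a b P j ≠ vpos a b Q j := vpos_ne hab (Ne.symm hj1)
    rcases mul_eq_zero.mp
        (show (1 - (c - F P) / (F Q - F P)) * (vpos a b P j - vpos a b Q j) = 0 by
          linear_combination hxj) with h' | h'
    · exact ht1 (by linarith)
    · exact hv (by linarith)
  have hset : isoPtsOnFace F c a b s = {isoPt F c a b P Q, isoPt F c a b Q R} := by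
    ext z
    rw [mem_iso hmem hPQ hQR hRS hSP hPR hQS]
    simp only [Set.mem_insert_iff, Set.mem_singleton_iff]
    constructor
    · rintro (⟨_, rfl⟩ | ⟨_, rfl⟩ | ⟨h, _⟩ | ⟨h, _⟩)
      · exact Or.inl rfl
      · exact Or.inr rfl
      · exact absurd h hn3
      · exact absurd h hn4
    · rintro (rfl | rfl)
      · exact Or.inl ⟨hm1, rfl⟩
      · exact Or.inr (Or.inl ⟨hm2, rfl⟩)
  exact ⟨_, _, hxy, hset, lines_part hxy hset⟩

lemma shapeB {F : Vtx → ℝ} {c : ℝ} {a b : Fin 3 → ℝ} (hab : ∀ i, a i < b i)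
    {s : Finset Vtx} {P Q R S : Vtx}
    (hmem : ∀ r : Vtx, r ∈ s ↔ r = P ∨ r = Q ∨ r = R ∨ r = S)
    (hPQ : Adj P Q) (hQR : Adj Q R) (hRS : Adj R S) (hSP : Adj S P)
    (hPR : ¬ Adj P R) (hQS : ¬ Adj Q S) (hPRne : P ≠ R) (hQSne : Q ≠ S)
    (hn1 : ¬ MixedE F c P Q) (hm2 : MixedE F c Q R)
    (hn3 : ¬ MixedE F c R S) (hm4 : MixedE F c S P) :
    ∃ x y : Fin 3 → ℝ, x ≠ y ∧ isoPtsOnFace F c a b s = {x, y} ∧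
      ∀ L : Set (Fin 3 → ℝ),
        (∃ u v, u ≠ v ∧ u ∈ isoPtsOnFace F c a b s ∧ v ∈ isoPtsOnFace F c a b s ∧
            L = segment ℝ u v) ↔ L = segment ℝ x y := by
  obtain ⟨j, hj1, hj2, hj3⟩ := opp_coord P Q R S hPQ hQR hSP hPRne hQSne
  have hxy : isoPt F c a b Q R ≠ isoPt F c a b S P := by
    intro h
    have hxj : isoPt F c a b Q R j = vpos a b Q j := by
      rw [isoPt_apply, ← vpos_eq hj2]; ring
    have hyj : isoPt F c a b S P j = vpos a b P j := by
      rw [isoPt_apply, vpos_eq hj3, ← vpos_eq hj3]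
      rw [vpos_eq hj3]; ring
    have hv : vpos a b P j ≠ vpos a b Q j := vpos_ne hab hj1
    rw [h, hyj] at hxj
    exact hv hxj
  have hset : isoPtsOnFace F c a b s = {isoPt F c a b Q R, isoPt F c a b S P} := by
    ext z
    rw [mem_iso hmem hPQ hQR hRS hSP hPR hQS]
    simp only [Set.mem_insert_iff, Set.mem_singleton_iff]
    constructor
    · rintro (⟨h, _⟩ | ⟨_, rfl⟩ | ⟨h, _⟩ | ⟨_, rfl⟩)
      · exact absurd h hn1
      · exact Or.inl rfl
      · exact absurd h hn3
      · exact Or.inr rfl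
    · rintro (rfl | rfl)
      · exact Or.inr (Or.inl ⟨hm2, rfl⟩)
      · exact Or.inr (Or.inr (Or.inr ⟨hm4, rfl⟩))
  exact ⟨_, _, hxy, hset, lines_part hxy hset⟩

set_option maxHeartbeats 1000000 in
lemma face_main {F : Vtx → ℝ} {c : ℝ} {a b : Fin 3 → ℝ} (hab : ∀ i, a i < b i)
    {s : Finset Vtx} {P Q R S : Vtx} (hreg : IsRegularFace F c s)
    (hmem : ∀ r : Vtx, r ∈ s ↔ r = P ∨ r = Q ∨ r = R ∨ r = S)
    (hPQ : Adj P Q) (hQR : Adj Q R) (hRS : Adj R S) (hSP : Adj S P)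
    (hPR : ¬ Adj P R) (hQS : ¬ Adj Q S) (hPRne : P ≠ R) (hQSne : Q ≠ S) :
    ∃ x y : Fin 3 → ℝ, x ≠ y ∧ isoPtsOnFace F c a b s = {x, y} ∧
      ∀ L : Set (Fin 3 → ℝ),
        (∃ u v, u ≠ v ∧ u ∈ isoPtsOnFace F c a b s ∧ v ∈ isoPtsOnFace F c a b s ∧
            L = segment ℝ u v) ↔ L = segment ℝ x y := by
  obtain ⟨hface, hnL, hnSing, hnD, hnC⟩ := hreg
  have memP : P ∈ s := (hmem P).2 (Or.inl rfl)
  have memQ : Q ∈ s := (hmem Q).2 (Or.inr (Or.inl rfl))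
  have memR : R ∈ s := (hmem R).2 (Or.inr (Or.inr (Or.inl rfl)))
  have memS : S ∈ s := (hmem S).2 (Or.inr (Or.inr (Or.inr rfl)))
  have hRP : ¬ Adj R P := fun h => hPR (adj_symm' _ _ h)
  have hSQ : ¬ Adj S Q := fun h => hQS (adj_symm' _ _ h)
  have hmQ : ∀ r : Vtx, r ∈ s ↔ r = Q ∨ r = R ∨ r = S ∨ r = P :=
    fun r => (hmem r).trans (by tauto)
  have hmR : ∀ r : Vtx, r ∈ s ↔ r = R ∨ r = S ∨ r = P ∨ r = Q :=
    fun r => (hmem r).trans (by tauto)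
  have hmS : ∀ r : Vtx, r ∈ s ↔ r = S ∨ r = P ∨ r = Q ∨ r = R :=
    fun r => (hmem r).trans (by tauto)
  rcases le_or_gt (F P) c with hP | hP <;> rcases le_or_gt (F Q) c with hQ | hQ <;>
    rcases le_or_gt (F R) c with hR | hR <;> rcases le_or_gt (F S) c with hS | hS
  -- 1: ≤≤≤≤ : all continuous
  · exact absurd (fun r hr => by
      rcases (hmem r).1 hr with rfl | rfl | rfl | rfl <;> assumption) hnC
  -- 2: ≤≤≤> : d=1 at S
  · exact shapeA hab hmR hRS hSP hPQ hQR hRP hSQ hPRne.symm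
      (Or.inl ⟨hR, hS⟩) (Or.inr ⟨hP, hS⟩) (not_mixed_le hP hQ) (not_mixed_le hQ hR)
      (ne_of_gt hS)
  -- 3: ≤≤>≤ : d=1 at R
  · exact shapeA hab hmQ hQR hRS hSP hPQ hQS hRP hQSne
      (Or.inl ⟨hQ, hR⟩) (Or.inr ⟨hS, hR⟩) (not_mixed_le hS hP) (not_mixed_le hP hQ)
      (ne_of_gt hR)
  -- 4: ≤≤>> : d=2 at R,S
  · exact shapeB hab hmR hRS hSP hPQ hQR hRP hSQ hPRne.symm hQSne.symm
      (not_mixed_lt hR hS) (Or.inr ⟨hP, hS⟩) (not_mixed_le hP hQ) (Or.inl ⟨hQ, hR⟩)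
  -- 5: ≤>≤≤ : d=1 at Q
  · exact shapeA hab hmem hPQ hQR hRS hSP hPR hQS hPRne
      (Or.inl ⟨hP, hQ⟩) (Or.inr ⟨hR, hQ⟩) (not_mixed_le hR hS) (not_mixed_le hS hP)
      (ne_of_gt hQ)
  -- 6: ≤>≤> : L-face Q,S
  · refine absurd ⟨hface, Q, S, memQ, memS, hQSne, hQ, hS, hQS, ?_⟩ hnL
    intro r hr h1 h2
    rcases (hmem r).1 hr with rfl | rfl | rfl | rfl
    exacts [hP, absurd rfl h1, hR, absurd rfl h2]
  -- 7: ≤>>≤ : d=2 at Q,R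
  · exact shapeB hab hmQ hQR hRS hSP hPQ hQS hRP hQSne hPRne.symm
      (not_mixed_lt hQ hR) (Or.inr ⟨hS, hR⟩) (not_mixed_le hS hP) (Or.inl ⟨hP, hQ⟩)
  -- 8: ≤>>> : d=3, continuous P
  · rcases eq_or_lt_of_le hP with heq | hlt
    · refine absurd ⟨hface, P, memP, heq, ?_⟩ hnSing
      intro q hq hqP
      rcases (hmem q).1 hq with rfl | rfl | rfl | rfl
      exacts [absurd rfl hqP, hQ, hR, hS]
    · exact shapeA hab hmS hSP hPQ hQR hRS hSQ hPR hQSne.symm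
        (Or.inr ⟨hP, hS⟩) (Or.inl ⟨hP, hQ⟩) (not_mixed_lt hQ hR) (not_mixed_lt hR hS)
        (ne_of_lt hlt)
  -- 9: >≤≤≤ : d=1 at P
  · exact shapeA hab hmS hSP hPQ hQR hRS hSQ hPR hQSne.symm
      (Or.inl ⟨hS, hP⟩) (Or.inr ⟨hQ, hP⟩) (not_mixed_le hQ hR) (not_mixed_le hR hS)
      (ne_of_gt hP)
  -- 10: >≤≤> : d=2 at S,P
  · exact shapeB hab hmS hSP hPQ hQR hRS hSQ hPR hQSne.symm hPRne
      (not_mixed_lt hS hP) (Or.inr ⟨hQ, hP⟩) (not_mixed_le hQ hR) (Or.inl ⟨hR, hS⟩)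
  -- 11: >≤>≤ : L-face P,R
  · refine absurd ⟨hface, P, R, memP, memR, hPRne, hP, hR, hPR, ?_⟩ hnL
    intro r hr h1 h2
    rcases (hmem r).1 hr with rfl | rfl | rfl | rfl
    exacts [absurd rfl h1, hQ, absurd rfl h2, hS]
  -- 12: >≤>> : d=3, continuous Q
  · rcases eq_or_lt_of_le hQ with heq | hlt
    · refine absurd ⟨hface, Q, memQ, heq, ?_⟩ hnSing
      intro q hq hqQ
      rcases (hmem q).1 hq with rfl | rfl | rfl | rfl
      exacts [hP, absurd rfl hqQ, hR, hS]
    · exact shapeA hab hmem hPQ hQR hRS hSP hPR hQS hPRne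
        (Or.inr ⟨hQ, hP⟩) (Or.inl ⟨hQ, hR⟩) (not_mixed_lt hR hS) (not_mixed_lt hS hP)
        (ne_of_lt hlt)
  -- 13: >>≤≤ : d=2 at P,Q
  · exact shapeB hab hmem hPQ hQR hRS hSP hPR hQS hPRne hQSne
      (not_mixed_lt hP hQ) (Or.inr ⟨hR, hQ⟩) (not_mixed_le hR hS) (Or.inl ⟨hS, hP⟩)
  -- 14: >>≤> : d=3, continuous R
  · rcases eq_or_lt_of_le hR with heq | hlt
    · refine absurd ⟨hface, R, memR, heq, ?_⟩ hnSing
      intro q hq hqR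
      rcases (hmem q).1 hq with rfl | rfl | rfl | rfl
      exacts [hP, hQ, absurd rfl hqR, hS]
    · exact shapeA hab hmQ hQR hRS hSP hPQ hQS hRP hQSne
        (Or.inr ⟨hR, hQ⟩) (Or.inl ⟨hR, hS⟩) (not_mixed_lt hS hP) (not_mixed_lt hP hQ)
        (ne_of_lt hlt)
  -- 15: >>>≤ : d=3, continuous S
  · rcases eq_or_lt_of_le hS with heq | hlt
    · refine absurd ⟨hface, S, memS, heq, ?_⟩ hnSing
      intro q hq hqS
      rcases (hmem q).1 hq with rfl | rfl | rfl | rfl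
      exacts [hP, hQ, hR, absurd rfl hqS]
    · exact shapeA hab hmR hRS hSP hPQ hQR hRP hSQ hPRne.symm
        (Or.inr ⟨hS, hR⟩) (Or.inl ⟨hS, hP⟩) (not_mixed_lt hP hQ) (not_mixed_lt hQ hR)
        (ne_of_lt hlt)
  -- 16: >>>> : all disperse
  · exact absurd (fun r hr => by
      rcases (hmem r).1 hr with rfl | rfl | rfl | rfl <;> assumption) hnD


set_option maxHeartbeats 1000000 in
/-- On a regular face of a geometrically realized labeled cuboid graph
there are exactly two iso-points, and consequently exactly one iso-line. -/
theorem stmt4 (F : Vtx → ℝ) (c : ℝ) (a b : Fin 3 → ℝ) (hab : ∀ i, a i < b i)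
    (hF : ∀ p, F p ∈ Set.Icc (0:ℝ) 1) (hc : c ∈ Set.Ioo (0:ℝ) 1)
    (s : Finset Vtx) (hs : IsRegularFace F c s) :
    ∃ x y : Fin 3 → ℝ, x ≠ y ∧ isoPtsOnFace F c a b s = {x, y} ∧
      ∀ L : Set (Fin 3 → ℝ),
        (∃ u v, u ≠ v ∧ u ∈ isoPtsOnFace F c a b s ∧ v ∈ isoPtsOnFace F c a b s ∧
            L = segment ℝ u v) ↔ L = segment ℝ x y := by
  obtain ⟨⟨i, v, hseq⟩, hnL, hnS, hnD, hnC⟩ := hs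
  subst hseq
  fin_cases i <;> fin_cases v
  · exact face_main (P := (0,0,0)) (Q := (0,0,1)) (R := (0,1,1)) (S := (0,1,0)) hab
      ⟨⟨_, _, rfl⟩, hnL, hnS, hnD, hnC⟩ (by decide) (by decide) (by decide) (by decide)
      (by decide) (by decide) (by decide) (by decide) (by decide)
  · exact face_main (P := (1,0,0)) (Q := (1,0,1)) (R := (1,1,1)) (S := (1,1,0)) hab
      ⟨⟨_, _, rfl⟩, hnL, hnS, hnD, hnC⟩ (by decide) (by decide) (by decide) (by decide)
      (by decide) (by decide) (by decide) (by decide) (by decide)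
  · exact face_main (P := (0,0,0)) (Q := (0,0,1)) (R := (1,0,1)) (S := (1,0,0)) hab
      ⟨⟨_, _, rfl⟩, hnL, hnS, hnD, hnC⟩ (by decide) (by decide) (by decide) (by decide)
      (by decide) (by decide) (by decide) (by decide) (by decide)
  · exact face_main (P := (0,1,0)) (Q := (0,1,1)) (R := (1,1,1)) (S := (1,1,0)) hab
      ⟨⟨_, _, rfl⟩, hnL, hnS, hnD, hnC⟩ (by decide) (by decide) (by decide) (by decide)
      (by decide) (by decide) (by decide) (by decide) (by decide)
  · exact face_main (P := (0,0,0)) (Q := (0,1,0)) (R := (1,1,0)) (S := (1,0,0)) hab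
      ⟨⟨_, _, rfl⟩, hnL, hnS, hnD, hnC⟩ (by decide) (by decide) (by decide) (by decide)
      (by decide) (by decide) (by decide) (by decide) (by decide)
  · exact face_main (P := (0,0,1)) (Q := (0,1,1)) (R := (1,1,1)) (S := (1,0,1)) hab
      ⟨⟨_, _, rfl⟩, hnL, hnS, hnD, hnC⟩ (by decide) (by decide) (by decide) (by decide)
      (by decide) (by decide) (by decide) (by decide) (by decide)
end

section
/- Let G be a regular labeled cuboid graph with iso-level c ∈ (0,1), and let H be an L-face of G. Then at least one of the following holds: one of the two disperse vertices of H is the disperse vertex of an S1-subgraph of G; one of the two disperse vertices of H is one of the two disperse vertices of an S2-subgraph of G; one of the two continuous vertices of H that is not an iso-node is the central vertex of an S3-subgraph of G (i.e., it satisfies F < c and all three of its neighbors are disperse). -/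
/-! ### Auxiliary machinery for `stmt6` -/

instance instDecAdj (p q : Vtx) : Decidable (Adj p q) := by unfold Adj; infer_instance

/-- Flip the `j`-th coordinate of a vertex. -/
def vflip : Fin 3 → Vtx → Vtx
| 0, (a,b,c) => (a+1, b, c)
| 1, (a,b,c) => (a, b+1, c)
| 2, (a,b,c) => (a, b, c+1)

lemma face_card' : ∀ (i : Fin 3) (v : Fin 2),
    (Finset.univ.filter (fun p : Vtx => coord i p = v)).card = 4 := by decide

set_option maxHeartbeats 4000000 in
set_option synthInstance.maxSize 50000 in
set_option synthInstance.maxHeartbeats 4000000 in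
lemma struct' : ∀ (i : Fin 3) (v : Fin 2) (p q r1 r2 : Vtx),
  coord i p = v → coord i q = v → coord i r1 = v → coord i r2 = v →
  p ≠ q → r1 ≠ p → r1 ≠ q → r2 ≠ p → r2 ≠ q → r1 ≠ r2 → ¬ Adj p q →
  (∀ x, Adj p x ↔ (x = r1 ∨ x = r2 ∨ x = vflip i p)) ∧
  (∀ x, Adj q x ↔ (x = r1 ∨ x = r2 ∨ x = vflip i q)) ∧
  (∀ x, Adj r1 x ↔ (x = p ∨ x = q ∨ x = vflip i r1)) ∧
  (∀ x, Adj r2 x ↔ (x = p ∨ x = q ∨ x = vflip i r2)) ∧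
  (∀ x, Adj (vflip i p) x ↔ (x = vflip i r1 ∨ x = vflip i r2 ∨ x = p)) ∧
  (∀ x, Adj (vflip i q) x ↔ (x = vflip i r1 ∨ x = vflip i r2 ∨ x = q)) := by decide

/-- The core abstract argument. -/
lemma helper' (F : Vtx → ℝ) (c : ℝ)
    (hreg3 : ∀ p, F p = c → ¬ ∀ q, Adj p q → c < F q)
    (s : Finset Vtx) (p q r1 r2 p' q' r1' r2' : Vtx)
    (hp : p ∈ s) (hq : q ∈ s) (hr1 : r1 ∈ s) (hr2 : r2 ∈ s)
    (Np : ∀ x, Adj p x ↔ (x = r1 ∨ x = r2 ∨ x = p'))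
    (Nq : ∀ x, Adj q x ↔ (x = r1 ∨ x = r2 ∨ x = q'))
    (Nr1 : ∀ x, Adj r1 x ↔ (x = p ∨ x = q ∨ x = r1'))
    (Nr2 : ∀ x, Adj r2 x ↔ (x = p ∨ x = q ∨ x = r2'))
    (Np' : ∀ x, Adj p' x ↔ (x = r1' ∨ x = r2' ∨ x = p))
    (hFp : c < F p) (hFq : c < F q) (hFr1 : F r1 ≤ c) (hFr2 : F r2 ≤ c) :
    (∃ p ∈ s, c < F p ∧ IsS1 F c p) ∨
    (∃ p ∈ s, c < F p ∧ ∃ q, IsS2 F c p q) ∨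
    (∃ p ∈ s, F p < c ∧ IsS3 F c p) := by
  by_cases hp' : c < F p'
  · by_cases hq' : c < F q'
    · by_cases h1 : c < F r1'
      · -- r1 is the center of an S3 subgraph
        have hall : ∀ x, Adj r1 x → c < F x := by
          intro x hx
          rcases (Nr1 x).1 hx with rfl | rfl | rfl
          exacts [hFp, hFq, h1]
        have hne : F r1 ≠ c := fun h => hreg3 r1 h hall
        exact Or.inr (Or.inr ⟨r1, hr1, lt_of_le_of_ne hFr1 hne,
          lt_of_le_of_ne hFr1 hne, hall⟩)
      · by_cases h2 : c < F r2'
        · -- r2 is the center of an S3 subgraph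
          have hall : ∀ x, Adj r2 x → c < F x := by
            intro x hx
            rcases (Nr2 x).1 hx with rfl | rfl | rfl
            exacts [hFp, hFq, h2]
          have hne : F r2 ≠ c := fun h => hreg3 r2 h hall
          exact Or.inr (Or.inr ⟨r2, hr2, lt_of_le_of_ne hFr2 hne,
            lt_of_le_of_ne hFr2 hne, hall⟩)
        · -- (p, p') is an S2 subgraph
          refine Or.inr (Or.inl ⟨p, hp, hFp, p', ?_, hFp, hp', ?_, ?_⟩)
          · exact (Np p').2 (Or.inr (Or.inr rfl))
          · intro r hr hne
            rcases (Np r).1 hr with rfl | rfl | rfl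
            exacts [hFr1, hFr2, absurd rfl hne]
          · intro r hr hne
            rcases (Np' r).1 hr with rfl | rfl | rfl
            exacts [le_of_not_gt h1, le_of_not_gt h2, absurd rfl hne]
    · -- q is an S1 subgraph
      refine Or.inl ⟨q, hq, hFq, hFq, ?_⟩
      intro x hx
      rcases (Nq x).1 hx with rfl | rfl | rfl
      exacts [hFr1, hFr2, le_of_not_gt hq']
  · -- p is an S1 subgraph
    refine Or.inl ⟨p, hp, hFp, hFp, ?_⟩
    intro x hx
    rcases (Np x).1 hx with rfl | rfl | rfl
    exacts [hFr1, hFr2, le_of_not_gt hp']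

/-- For an L-face `s` of a regular labeled cuboid graph, one of its disperse
vertices is the disperse vertex of an S1-subgraph, or one of its disperse vertices is
one of the two disperse vertices of an S2-subgraph, or one of its continuous
non-iso-node vertices is the central vertex of an S3-subgraph. -/
theorem stmt6 (F : Vtx → ℝ) (c : ℝ) (hF : ∀ p, F p ∈ Set.Icc (0:ℝ) 1)
    (hc : c ∈ Set.Ioo (0:ℝ) 1) (hreg : RegularGraph F c)
    (s : Finset Vtx) (hs : IsLFace F c s) :
    (∃ p ∈ s, c < F p ∧ IsS1 F c p) ∨
    (∃ p ∈ s, c < F p ∧ ∃ q, IsS2 F c p q) ∨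
    (∃ p ∈ s, F p < c ∧ IsS3 F c p) := by
  obtain ⟨⟨i, v, hsdef⟩, p, q, hp, hq, hpq, hFp, hFq, hnadj, hrest⟩ := hs
  have hreg3 := hreg.2.2.1
  have hcoord : ∀ x ∈ s, coord i x = v := by
    intro x hx
    rw [hsdef] at hx
    exact (Finset.mem_filter.1 hx).2
  -- extract the other two vertices of the face
  have hcard : s.card = 4 := by rw [hsdef]; exact face_card' i v
  have hps : p ∈ s.erase q := Finset.mem_erase.2 ⟨hpq, hp⟩
  have hcard2 : ((s.erase q).erase p).card = 2 := by
    rw [Finset.card_erase_of_mem hps, Finset.card_erase_of_mem hq, hcard]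
  obtain ⟨r1, r2, hr12, ht⟩ := Finset.card_eq_two.1 hcard2
  have hr1t : r1 ∈ (s.erase q).erase p := by rw [ht]; simp
  have hr2t : r2 ∈ (s.erase q).erase p := by rw [ht]; simp
  have hr1p : r1 ≠ p := (Finset.mem_erase.1 hr1t).1
  have hr1q : r1 ≠ q := (Finset.mem_erase.1 (Finset.mem_erase.1 hr1t).2).1
  have hr1s : r1 ∈ s := (Finset.mem_erase.1 (Finset.mem_erase.1 hr1t).2).2
  have hr2p : r2 ≠ p := (Finset.mem_erase.1 hr2t).1
  have hr2q : r2 ≠ q := (Finset.mem_erase.1 (Finset.mem_erase.1 hr2t).2).1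
  have hr2s : r2 ∈ s := (Finset.mem_erase.1 (Finset.mem_erase.1 hr2t).2).2
  obtain ⟨Np, Nq, Nr1, Nr2, Np', _⟩ :=
    struct' i v p q r1 r2 (hcoord p hp) (hcoord q hq) (hcoord r1 hr1s)
      (hcoord r2 hr2s) hpq hr1p hr1q hr2p hr2q hr12 hnadj
  exact helper' F c hreg3 s p q r1 r2 (vflip i p) (vflip i q) (vflip i r1) (vflip i r2)
    hp hq hr1s hr2s Np Nq Nr1 Nr2 Np' hFp hFq
    (hrest r1 hr1s hr1p hr1q) (hrest r2 hr2s hr2p hr2q)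
end

section
/- Let G be an irreducible labeled cuboid graph with iso-level c ∈ (0,1). Then 1 ≤ D(G) ≤ 7, G has no L-face, and moreover: if D(G) = 2 then the two disperse vertices are not antipodal, and if D(G) = 6 then the two continuous vertices are not antipodal. -/
/-- An irreducible labeled cuboid graph satisfies `1 ≤ D(G) ≤ 7`, has no
L-face, and if `D(G) = 2` (resp. `D(G) = 6`) then the two disperse (resp. continuous)
vertices are not antipodal. -/
theorem stmt7 (F : Vtx → ℝ) (c : ℝ) (hF : ∀ p, F p ∈ Set.Icc (0:ℝ) 1)
    (hc : c ∈ Set.Ioo (0:ℝ) 1) (hirr : IrreducibleGraph F c) :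
    1 ≤ DG F c ∧ DG F c ≤ 7 ∧ (¬ ∃ s, IsLFace F c s) ∧
    (DG F c = 2 → ∀ p q, c < F p → c < F q → ¬ Antipodal p q) ∧
    (DG F c = 6 → ∀ p q, F p ≤ c → F q ≤ c → ¬ Antipodal p q) := by
  obtain ⟨hreg, hnred⟩ := hirr
  have hnoL : ¬ ∃ s, IsLFace F c s := fun h => hnred ⟨hreg, Or.inl h⟩
  have hnoS1 : ¬ (DG F c = 2 ∧ ∃ p, IsS1 F c p) :=
    fun h => hnred ⟨hreg, Or.inr (Or.inl h)⟩
  have hnoS3 : ¬ (DG F c = 6 ∧ ∃ p, IsS3 F c p) :=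
    fun h => hnred ⟨hreg, Or.inr (Or.inr h)⟩
  have hdiffself : ∀ p : Vtx, diffCount p p = 0 := by
    intro p; simp [diffCount]
  have hcard8 : Nat.card Vtx = 8 := by
    simp [Nat.card_eq_fintype_card]
  have h1 : 1 ≤ DG F c := by
    have h := hreg.2.1
    push_neg at h
    obtain ⟨p, hp⟩ := h
    exact (Set.ncard_pos (Set.toFinite _)).mpr ⟨p, hp⟩
  have h7 : DG F c ≤ 7 := by
    have h := hreg.1
    push_neg at h
    obtain ⟨p, hp⟩ := h
    have hss : {q : Vtx | c < F q} ⊂ Set.univ := by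
      refine ⟨Set.subset_univ _, fun hsub => not_lt.mpr hp (hsub (Set.mem_univ p))⟩
    have := Set.ncard_lt_ncard hss (Set.finite_univ)
    rw [Set.ncard_univ, hcard8] at this
    unfold DG
    omega
  refine ⟨h1, h7, hnoL, ?_, ?_⟩
  · -- D = 2 case
    intro hD2 p q hp hq hanti
    have hpq : p ≠ q := by
      intro h; rw [h] at hanti
      rw [Antipodal, hdiffself] at hanti; omega
    have hsub : ({p, q} : Set Vtx) ⊆ {r : Vtx | c < F r} := by
      intro r hr; rcases hr with h | h <;> simp_all
    have hset : ({p, q} : Set Vtx) = {r : Vtx | c < F r} := by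
      refine Set.eq_of_subset_of_ncard_le hsub ?_ (Set.toFinite _)
      rw [Set.ncard_pair hpq]
      exact le_of_eq hD2
    apply hnoS1
    refine ⟨hD2, p, hp, fun r hadj => ?_⟩
    have hrp : r ≠ p := by
      intro h; rw [h] at hadj; rw [Adj, hdiffself] at hadj; omega
    have hrq : r ≠ q := by
      intro h; rw [h] at hadj; rw [Adj] at hadj; rw [Antipodal] at hanti
      omega
    by_contra hcr
    push_neg at hcr
    have : r ∈ ({p, q} : Set Vtx) := hset ▸ hcr
    rcases this with h | h
    · exact hrp h
    · exact hrq h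
  · -- D = 6 case
    intro hD6 p q hp hq hanti
    have hpq : p ≠ q := by
      intro h; rw [h] at hanti
      rw [Antipodal, hdiffself] at hanti; omega
    have hcompl : ({r : Vtx | c < F r}ᶜ).ncard = 2 := by
      have := Set.ncard_add_ncard_compl {r : Vtx | c < F r}
      rw [hcard8] at this
      unfold DG at hD6
      omega
    have hsub : ({p, q} : Set Vtx) ⊆ {r : Vtx | c < F r}ᶜ := by
      intro r hr
      rcases hr with h | h <;> subst h <;> simp [not_lt] <;> assumption
    have hset : ({p, q} : Set Vtx) = {r : Vtx | c < F r}ᶜ := by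
      refine Set.eq_of_subset_of_ncard_le hsub ?_ (Set.toFinite _)
      rw [Set.ncard_pair hpq, hcompl]
    have hnb : ∀ r, Adj p r → c < F r := by
      intro r hadj
      have hrp : r ≠ p := by
        intro h; rw [h] at hadj; rw [Adj, hdiffself] at hadj; omega
      have hrq : r ≠ q := by
        intro h; rw [h] at hadj; rw [Adj] at hadj; rw [Antipodal] at hanti
        omega
      by_contra hcr
      have : r ∈ ({p, q} : Set Vtx) := by rw [hset]; exact hcr
      rcases this with h | h
      · exact hrp h
      · exact hrq h
    have hplt : F p < c := by
      rcases lt_or_eq_of_le hp with h | h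
      · exact h
      · exact absurd hnb (hreg.2.2.1 p h)
    exact hnoS3 ⟨hD6, p, hplt, hnb⟩
end

section
/- Let G be a regular labeled cuboid graph with iso-level c ∈ (0,1) that has at least one singular face. Then G has at most three singular faces; no iso-node lies on two distinct singular faces (so distinct singular faces have distinct iso-nodes); and if G has exactly n singular faces with n ∈ {2,3}, then the n iso-nodes lying on these singular faces are pairwise either diagonal vertices of a regular face of G or antipodal vertices of the cube. -/
section Aux

set_option synthInstance.maxSize 2000 in
lemma vext3 : ∀ (p q : Vtx) (i j k : Fin 3), i ≠ j → i ≠ k → j ≠ k →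
    coord i p = coord i q → coord j p = coord j q → coord k p = coord k q → p = q := by decide

lemma fin2_eq : ∀ a b c : Fin 2, a ≠ c → b ≠ c → a = b := by decide

lemma fin2_cases : ∀ a v w : Fin 2, v ≠ w → a = v ∨ a = w := by decide

lemma adj_ne : ∀ p q : Vtx, Adj p q → p ≠ q := by decide

set_option synthInstance.maxSize 2000 in
lemma adj_other : ∀ (p q : Vtx) (i j : Fin 3), Adj p q → coord i p ≠ coord i q → j ≠ i →
    coord j p = coord j q := by decide

lemma flip_ex : ∀ (p : Vtx) (i : Fin 3), ∃ a, Adj p a ∧ coord i a ≠ coord i p ∧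
    ∀ j, j ≠ i → coord j a = coord j p := by decide

set_option synthInstance.maxSize 2000 in
lemma two_or_three : ∀ (p q : Vtx) (i j : Fin 3), i ≠ j → coord i p ≠ coord i q →
    coord j p ≠ coord j q → diffCount p q = 2 ∨ diffCount p q = 3 := by decide

lemma third : ∀ (i j : Fin 3), i ≠ j → ∃ k, k ≠ i ∧ k ≠ j := by decide

set_option synthInstance.maxSize 2000 in
lemma agree_third : ∀ (p q : Vtx) (i j k : Fin 3), i ≠ j → k ≠ i → k ≠ j →
    coord i p ≠ coord i q → coord j p ≠ coord j q → diffCount p q = 2 →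
    coord k p = coord k q := by decide

lemma card8 : Nat.card Vtx = 8 := by simp [Nat.card_eq_fintype_card]

/-- The face of the cube in direction `i` at value `v`. -/
abbrev faceF (i : Fin 3) (v : Fin 2) : Finset Vtx :=
  Finset.univ.filter (fun p => coord i p = v)

lemma mem_faceF {x : Vtx} {i : Fin 3} {v : Fin 2} : x ∈ faceF i v ↔ coord i x = v := by
  simp [faceF]

lemma sing_elim {F : Vtx → ℝ} {c : ℝ} {s : Finset Vtx} (hs : IsSingularFace F c s) :
    ∃ p ∈ s, F p = c ∧ (∀ q ∈ s, q ≠ p → c < F q) ∧ (∀ x ∈ s, F x = c → x = p) := by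
  obtain ⟨-, p, hp, hpc, hq⟩ := hs
  refine ⟨p, hp, hpc, hq, ?_⟩
  intro x hx hxc
  by_contra hne
  exact absurd (hq x hx hne) (by simp [hxc])

/-- Two singular faces in the same direction coincide. -/
lemma sameDir {F : Vtx → ℝ} {c : ℝ} (hreg : RegularGraph F c) {i : Fin 3} {v w : Fin 2}
    (hs : IsSingularFace F c (faceF i v)) (ht : IsSingularFace F c (faceF i w)) : v = w := by
  by_contra hvw
  obtain ⟨p, hp, hpc, hpd, hpu⟩ := sing_elim hs
  obtain ⟨q, hq, hqc, hqd, hqu⟩ := sing_elim ht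
  have hpi : coord i p = v := mem_faceF.1 hp
  have hqi : coord i q = w := mem_faceF.1 hq
  have hpq : p ≠ q := by
    rintro rfl; exact hvw (hpi.symm.trans hqi)
  by_cases hadj : Adj p q
  · refine hreg.2.2.2.1 ⟨p, q, hadj, hpc, hqc, ?_⟩
    have hset : {r : Vtx | r ≠ p ∧ r ≠ q ∧ c < F r} = (Set.univ \ {p, q}) := by
      ext r
      simp only [Set.mem_setOf_eq, Set.mem_diff, Set.mem_univ, Set.mem_insert_iff,
        Set.mem_singleton_iff, true_and]
      constructor
      · rintro ⟨h1, h2, -⟩ (h | h)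
        · exact h1 h
        · exact h2 h
      · intro h
        have h1 : r ≠ p := fun e => h (Or.inl e)
        have h2 : r ≠ q := fun e => h (Or.inr e)
        refine ⟨h1, h2, ?_⟩
        rcases fin2_cases (coord i r) v w hvw with hr | hr
        · exact hpd r (mem_faceF.2 hr) h1
        · exact hqd r (mem_faceF.2 hr) h2
    rw [hset, Set.ncard_diff (Set.subset_univ _), Set.ncard_univ, card8, Set.ncard_pair hpq]
    norm_num
  · refine hreg.2.2.1 p hpc ?_
    intro r hr
    have hrp : r ≠ p := (adj_ne p r hr).symm
    rcases fin2_cases (coord i r) v w hvw with h | h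
    · exact hpd r (mem_faceF.2 h) hrp
    · have hrq : r ≠ q := by rintro rfl; exact hadj hr
      exact hqd r (mem_faceF.2 h) hrq

/-- No iso-node lies on two distinct singular faces. -/
lemma part2 {F : Vtx → ℝ} {c : ℝ} (hreg : RegularGraph F c) :
    ∀ p : Vtx, F p = c → ∀ s t : Finset Vtx,
      IsSingularFace F c s → IsSingularFace F c t → p ∈ s → p ∈ t → s = t := by
  intro p hpc s t hs ht hps hpt
  obtain ⟨i, v, rfl⟩ := hs.1
  obtain ⟨j, w, rfl⟩ := ht.1
  by_cases hij : i = j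
  · subst hij
    rw [sameDir hreg hs ht]
  · exfalso
    obtain ⟨ps, hps', hpsc, hpsd, hpsu⟩ := sing_elim hs
    obtain ⟨pt, hpt', hptc, hptd, hptu⟩ := sing_elim ht
    have hes := hpsu p hps hpc
    have het := hptu p hpt hpc
    subst hes het
    apply hreg.2.2.1 p hpc
    intro r hr
    have hrp : r ≠ p := (adj_ne p r hr).symm
    by_cases h : coord i r = coord i p
    · exact hpsd r (mem_faceF.2 (h.trans (mem_faceF.1 hps))) hrp
    · have hj : coord j p = coord j r :=
        adj_other p r i j hr (fun e => h e.symm) (Ne.symm hij)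
      exact hptd r (mem_faceF.2 (hj.symm.trans (mem_faceF.1 hpt))) hrp

/-- Direction of a face. -/
noncomputable def dirOf (s : Finset Vtx) : Fin 3 :=
  if h : ∃ i : Fin 3, ∃ v : Fin 2, s = faceF i v then h.choose else 0

lemma dirOf_spec {s : Finset Vtx} (h : IsFace s) : ∃ v, s = faceF (dirOf s) v := by
  have h' : ∃ i : Fin 3, ∃ v : Fin 2, s = faceF i v := h
  rw [dirOf, dif_pos h']
  exact h'.choose_spec

end Aux

/-- The core geometric lemma for distinct singular faces. -/
lemma part3 {F : Vtx → ℝ} {c : ℝ} (hreg : RegularGraph F c) :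
    ∀ s t : Finset Vtx, IsSingularFace F c s → IsSingularFace F c t → s ≠ t →
      ∀ p ∈ s, ∀ q ∈ t, F p = c → F q = c →
        (∃ r : Finset Vtx, IsRegularFace F c r ∧ p ∈ r ∧ q ∈ r ∧ Diag p q) ∨
          Antipodal p q := by
  intro s t hs ht hst p hps q hqt hpc hqc
  obtain ⟨i, v, rfl⟩ := hs.1
  obtain ⟨j, w, rfl⟩ := ht.1
  have hij : i ≠ j := by
    rintro rfl
    exact hst (by rw [sameDir hreg hs ht])
  -- p and q are the iso-nodes of s and t respectively
  obtain ⟨ps, hps', hpsc, hpsd, hpsu⟩ := sing_elim hs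
  obtain ⟨pt, hpt', hptc, hptd, hptu⟩ := sing_elim ht
  have hes := hpsu p hps hpc
  have het := hptu q hqt hqc
  subst hes het
  -- q is not on s, p is not on t
  have hqs : q ∉ faceF i v := by
    intro hq'
    exact hst (part2 hreg q hqc _ _ hs ht hq' hqt)
  have hpt2 : p ∉ faceF j w := by
    intro hp'
    exact hst (part2 hreg p hpc _ _ hs ht hps hp')
  have hpi : coord i p = v := mem_faceF.1 hps
  have hqj : coord j q = w := mem_faceF.1 hqt
  have hdi : coord i p ≠ coord i q := by
    intro e; exact hqs (mem_faceF.2 (e.symm.trans hpi))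
  have hdj : coord j p ≠ coord j q := by
    intro e; exact hpt2 (mem_faceF.2 (e.trans hqj))
  rcases two_or_three p q i j hij hdi hdj with h2 | h3
  · -- diagonal case: construct the regular face
    left
    obtain ⟨k, hki, hkj⟩ := third i j hij
    have hk : coord k p = coord k q := agree_third p q i j k hij hki hkj hdi hdj h2
    have hpq : p ≠ q := fun e => hdi (by rw [e])
    -- the common face
    have hpr : p ∈ faceF k (coord k p) := mem_faceF.2 rfl
    have hqr : q ∈ faceF k (coord k p) := mem_faceF.2 hk.symm
    -- b : the neighbor of p inside s and r
    obtain ⟨b, hba, hbj, hbo⟩ := flip_ex p j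
    have hbs : b ∈ faceF i v := mem_faceF.2 ((hbo i hij).trans hpi)
    have hbr : b ∈ faceF k (coord k p) := mem_faceF.2 (hbo k hkj)
    have hbp : b ≠ p := fun e => hbj (by rw [e])
    have hbd : c < F b := hpsd b hbs hbp
    -- a : the neighbor of p perpendicular to s, inside r
    obtain ⟨a, haa, hai, hao⟩ := flip_ex p i
    have har : a ∈ faceF k (coord k p) := mem_faceF.2 (hao k hki)
    have hac : F a ≤ c := by
      by_contra hac
      push_neg at hac
      apply hreg.2.2.1 p hpc
      intro r' hr'
      by_cases h : coord i r' = coord i p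
      · exact hpsd r' (mem_faceF.2 (h.trans hpi)) (adj_ne p r' hr').symm
      · have hri : coord i r' = coord i a := fin2_eq _ _ _ h hai
        have hrj : coord j r' = coord j a := by
          rw [hao j (Ne.symm hij)]
          exact (adj_other p r' i j hr' (fun e => h e.symm) (Ne.symm hij)).symm
        have hrk : coord k r' = coord k a := by
          rw [hao k hki]
          exact (adj_other p r' i k hr' (fun e => h e.symm) hki).symm
        have : r' = a := vext3 r' a i j k hij hki.symm hkj.symm hri hrj hrk
        rw [this]
        exact hac
    -- classify the four vertices of r
    have hchar : ∀ x ∈ faceF k (coord k p), x = p ∨ x = q ∨ x = a ∨ x = b := by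
      intro x hx
      have hxk : coord k x = coord k p := mem_faceF.1 hx
      by_cases hxi : coord i x = coord i p
      · by_cases hxj : coord j x = coord j p
        · exact Or.inl (vext3 x p i j k hij hki.symm hkj.symm hxi hxj hxk)
        · refine Or.inr (Or.inr (Or.inr ?_))
          refine vext3 x b i j k hij hki.symm hkj.symm ?_ ?_ ?_
          · rw [hxi, ← hbo i hij]
          · exact fin2_eq _ _ _ hxj hbj
          · rw [hxk, ← hbo k hkj]
      · by_cases hxj : coord j x = coord j p
        · refine Or.inr (Or.inr (Or.inl ?_))
          refine vext3 x a i j k hij hki.symm hkj.symm ?_ ?_ ?_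
          · exact fin2_eq _ _ _ hxi hai
          · rw [hxj, ← hao j (Ne.symm hij)]
          · rw [hxk, ← hao k hki]
        · refine Or.inr (Or.inl ?_)
          refine vext3 x q i j k hij hki.symm hkj.symm ?_ ?_ ?_
          · exact fin2_eq _ _ _ hxi (Ne.symm hdi)
          · exact fin2_eq _ _ _ hxj (Ne.symm hdj)
          · rw [hxk, hk]
    -- the only disperse vertex on r is b
    have honly : ∀ y ∈ faceF k (coord k p), c < F y → y = b := by
      intro y hy hyd
      rcases hchar y hy with rfl | rfl | rfl | rfl
      · exact absurd hyd (by simp [hpc])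
      · exact absurd hyd (by simp [hqc])
      · exact absurd hyd (not_lt.2 hac)
      · rfl
    refine ⟨faceF k (coord k p), ⟨⟨k, coord k p, rfl⟩, ?_, ?_, ?_, ?_⟩, hpr, hqr, h2⟩
    · rintro ⟨-, p', q', hp', hq', hne, hdp', hdq', -, -⟩
      exact hne (((honly p' hp' hdp').trans (honly q' hq' hdq').symm))
    · rintro ⟨-, p0, hp0, hp0c, hothers⟩
      by_cases hpp0 : p = p0
      · have := hothers q hqr (fun e => hpq (hpp0.trans e.symm))
        exact absurd this (by simp [hqc])
      · have := hothers p hpr hpp0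
        exact absurd this (by simp [hpc])
    · intro hall
      exact absurd (hall p hpr) (by simp [hpc])
    · intro hall
      exact absurd hbd (not_lt.2 (hall b hbr))
  · exact Or.inr h3

/-- A regular labeled cuboid graph has at most three singular faces; no
iso-node lies on two distinct singular faces; and the iso-nodes of distinct singular
faces are pairwise either diagonal vertices of a regular face or antipodal. -/
theorem stmt10 (F : Vtx → ℝ) (c : ℝ) (hF : ∀ p, F p ∈ Set.Icc (0:ℝ) 1)
    (hc : c ∈ Set.Ioo (0:ℝ) 1) (hreg : RegularGraph F c)
    (hsing : ∃ s, IsSingularFace F c s) :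
    Set.ncard {s : Finset Vtx | IsSingularFace F c s} ≤ 3 ∧
    (∀ p : Vtx, F p = c → ∀ s t : Finset Vtx,
      IsSingularFace F c s → IsSingularFace F c t → p ∈ s → p ∈ t → s = t) ∧
    (∀ s t : Finset Vtx, IsSingularFace F c s → IsSingularFace F c t → s ≠ t →
      ∀ p ∈ s, ∀ q ∈ t, F p = c → F q = c →
        (∃ r : Finset Vtx, IsRegularFace F c r ∧ p ∈ r ∧ q ∈ r ∧ Diag p q) ∨
          Antipodal p q) := by
  refine ⟨?_, part2 hreg, part3 hreg⟩
  have hinj : Set.InjOn dirOf {s : Finset Vtx | IsSingularFace F c s} := by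
    intro s hs' t ht' h
    simp only [Set.mem_setOf_eq] at hs' ht'
    obtain ⟨v, hv⟩ := dirOf_spec hs'.1
    obtain ⟨w, hw⟩ := dirOf_spec ht'.1
    rw [hv] at hs'
    rw [hw] at ht'
    rw [h] at hs'
    have hvw := sameDir hreg hs' ht'
    rw [hv, hw, h, hvw]
  have hle := Set.ncard_le_ncard_of_injOn dirOf
    (fun a _ => Set.mem_univ (dirOf a)) hinj Set.finite_univ
  simpa [Set.ncard_univ, Nat.card_eq_fintype_card] using hle
end

section
/- Let C₁, C₂, C₃, C₄ be a system of cuboids in ℝ³ with common edge e. Then for each C ∈ {C₁, C₂, C₃, C₄} there exist two distinct cuboids Cᵢ and Cⱼ in the system, both different from C, such that C and Cᵢ are face-neighbors and C and Cⱼ are face-neighbors. -/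
/-- A cuboid `[a₁,b₁]×[a₂,b₂]×[a₃,b₃] ⊂ ℝ³` with `aᵢ < bᵢ`. -/
structure Cuboid where
  a : Fin 3 → ℝ
  b : Fin 3 → ℝ
  lt : ∀ i, a i < b i

/-- The point set of a cuboid. -/
def Cuboid.toSet (C : Cuboid) : Set (Fin 3 → ℝ) :=
  {x | ∀ i, x i ∈ Set.Icc (C.a i) (C.b i)}

/-- `s` is a face of the cuboid `C`: one factor is replaced by an endpoint singleton. -/
def Cuboid.IsFace (C : Cuboid) (s : Set (Fin 3 → ℝ)) : Prop :=
  ∃ i : Fin 3, ∃ v ∈ ({C.a i, C.b i} : Set ℝ),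
    s = {x | x i = v ∧ ∀ j, j ≠ i → x j ∈ Set.Icc (C.a j) (C.b j)}

/-- `s` is an edge of the cuboid `C`: two factors are replaced by endpoint singletons. -/
def Cuboid.IsEdge (C : Cuboid) (s : Set (Fin 3 → ℝ)) : Prop :=
  ∃ i j : Fin 3, i ≠ j ∧ ∃ vi ∈ ({C.a i, C.b i} : Set ℝ), ∃ vj ∈ ({C.a j, C.b j} : Set ℝ),
    s = {x | x i = vi ∧ x j = vj ∧ ∀ k, k ≠ i → k ≠ j → x k ∈ Set.Icc (C.a k) (C.b k)}

/-- Two cuboids are face-neighbors if their intersection is a face of both. -/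
def FaceNeighbors (C D : Cuboid) : Prop :=
  C.IsFace (C.toSet ∩ D.toSet) ∧ D.IsFace (C.toSet ∩ D.toSet)

/-- A system of four cuboids with common edge `e`. -/
def SystemOfCuboids (C : Fin 4 → Cuboid) (e : Set (Fin 3 → ℝ)) : Prop :=
  (∀ i j, i ≠ j → C i ≠ C j) ∧ (∀ i, (C i).IsEdge e) ∧
    (∀ i j, i ≠ j → ¬ ((C i).toSet ∩ (C j).toSet ⊆ e) → FaceNeighbors (C i) (C j))

/-- In a system of cuboids with common edge `e`, every cuboid has two
distinct face-neighbors within the system. -/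
theorem stmt12 (C : Fin 4 → Cuboid) (e : Set (Fin 3 → ℝ))
    (hsys : SystemOfCuboids C e) :
    ∀ k : Fin 4, ∃ i j : Fin 4, i ≠ k ∧ j ≠ k ∧ i ≠ j ∧
      FaceNeighbors (C k) (C i) ∧ FaceNeighbors (C k) (C j) := by
  classical
  obtain ⟨hdist, hedge, hnbr⟩ := hsys
  choose I J hIJ vi hvi vj hvj he using hedge
  -- the third index
  have h3 : ∀ i j : Fin 3, i ≠ j → ∃ k, (k ≠ i ∧ k ≠ j) ∧ ∀ l, l ≠ i → l ≠ j → l = k := by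
    decide
  choose K' hK'1 hK'2 using fun m => h3 (I m) (J m) (hIJ m)
  -- points of the edge
  set q : Fin 4 → ℝ → (Fin 3 → ℝ) :=
    fun m t l => if l = I m then vi m else if l = J m then vj m else t with hqdef
  have hq : ∀ m t, t ∈ Set.Icc ((C m).a (K' m)) ((C m).b (K' m)) → q m t ∈ e := by
    intro m t ht
    rw [he m]
    refine ⟨?_, ?_, ?_⟩
    · simp [hqdef]
    · simp [hqdef, (hIJ m).symm]
    · intro l hl1 hl2
      have hlk : l = K' m := hK'2 m l hl1 hl2
      subst hlk
      simpa [hqdef, (hK'1 m).1, (hK'1 m).2] using ht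
  have hmem : ∀ m x, x ∈ e → x (I m) = vi m ∧ x (J m) = vj m ∧
      ∀ l, l ≠ I m → l ≠ J m → x l ∈ Set.Icc ((C m).a l) ((C m).b l) := by
    intro m x hx; rw [he m] at hx; exact hx
  have hqK : ∀ t, q 0 t (K' 0) = t := by
    intro t; simp [hqdef, (hK'1 0).1, (hK'1 0).2]
  have hx0 : q 0 ((C 0).a (K' 0)) ∈ e := hq 0 _ ⟨le_refl _, ((C 0).lt _).le⟩
  have hy0 : q 0 ((C 0).b (K' 0)) ∈ e := hq 0 _ ⟨((C 0).lt _).le, le_refl _⟩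
  -- all cuboids have the same free direction
  have hKeq : ∀ m, K' m = K' 0 := by
    intro m
    have h1 := hmem m _ hx0
    have h2 := hmem m _ hy0
    have hne : ((C 0).a (K' 0)) ≠ ((C 0).b (K' 0)) := ((C 0).lt _).ne
    have hIne : K' 0 ≠ I m := by
      intro h
      apply hne
      have e1 := h1.1; have e2 := h2.1
      rw [← h, hqK] at e1 e2
      exact e1.trans e2.symm
    have hJne : K' 0 ≠ J m := by
      intro h
      apply hne
      have e1 := h1.2.1; have e2 := h2.2.1
      rw [← h, hqK] at e1 e2
      exact e1.trans e2.symm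
    exact (hK'2 m (K' 0) hIne hJne).symm
  obtain ⟨K, hKm⟩ : ∃ K, ∀ m, K' m = K := ⟨K' 0, hKeq⟩
  have hKne : ∀ m, K ≠ I m ∧ K ≠ J m := fun m => (hKm m) ▸ hK'1 m
  have hKuniq : ∀ m l, l ≠ I m → l ≠ J m → l = K := fun m l h1 h2 => (hKm m) ▸ hK'2 m l h1 h2
  have hcover : ∀ m l, l ≠ K → l = I m ∨ l = J m := by
    intro m l h
    by_contra hc
    push_neg at hc
    exact h (hKuniq m l hc.1 hc.2)
  -- a base point of the edge
  set P : Fin 3 → ℝ := q 0 ((C 0).a (K' 0)) with hPdef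
  have hP : P ∈ e := hx0
  have hfix : ∀ x ∈ e, ∀ l, l ≠ K → x l = P l := by
    intro x hx l hl
    rcases hcover 0 l hl with h | h
    · rw [h]; exact ((hmem 0 x hx).1).trans ((hmem 0 P hP).1).symm
    · rw [h]; exact ((hmem 0 x hx).2.1).trans ((hmem 0 P hP).2.1).symm
  have hchar : ∀ m x, x ∈ e ↔ ((∀ l, l ≠ K → x l = P l) ∧
      x K ∈ Set.Icc ((C m).a K) ((C m).b K)) := by
    intro m x
    constructor
    · intro hx
      exact ⟨hfix x hx, (hmem m x hx).2.2 K (hKne m).1 (hKne m).2⟩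
    · rintro ⟨h1, h2⟩
      rw [he m]
      refine ⟨?_, ?_, ?_⟩
      · exact (h1 (I m) (Ne.symm (hKne m).1)).trans (hmem m P hP).1
      · exact (h1 (J m) (Ne.symm (hKne m).2)).trans (hmem m P hP).2.1
      · intro l hl1 hl2
        have : l = K := hKuniq m l hl1 hl2
        subst this
        exact h2
  -- common interval in the free direction
  have hIcc : ∀ m, Set.Icc ((C m).a K) ((C m).b K) = Set.Icc ((C 0).a K) ((C 0).b K) := by
    intro m
    ext t
    have hfix' : ∀ l, l ≠ K → Function.update P K t l = P l :=
      fun l hl => Function.update_of_ne hl _ _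
    have hKt : Function.update P K t K = t := Function.update_self _ _ _
    constructor <;> intro ht
    · have h1 : Function.update P K t ∈ e := (hchar m _).mpr ⟨hfix', by rw [hKt]; exact ht⟩
      have h2 := ((hchar 0 _).mp h1).2
      rwa [hKt] at h2
    · have h1 : Function.update P K t ∈ e := (hchar 0 _).mpr ⟨hfix', by rw [hKt]; exact ht⟩
      have h2 := ((hchar m _).mp h1).2
      rwa [hKt] at h2
  have hcd : (C 0).a K < (C 0).b K := (C 0).lt K
  have hcK : ∀ m, (C 0).a K ∈ Set.Icc ((C m).a K) ((C m).b K) := by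
    intro m; rw [hIcc m]; exact ⟨le_rfl, hcd.le⟩
  have hdK : ∀ m, (C 0).b K ∈ Set.Icc ((C m).a K) ((C m).b K) := by
    intro m; rw [hIcc m]; exact ⟨hcd.le, le_rfl⟩
  -- each cuboid has P as a corner off the free direction
  have hP_ab : ∀ m l, l ≠ K → P l = (C m).a l ∨ P l = (C m).b l := by
    intro m l hl
    rcases hcover m l hl with h | h
    · rw [h, (hmem m P hP).1]
      simpa using hvi m
    · rw [h, (hmem m P hP).2.1]
      simpa using hvj m
  have hPIcc : ∀ m l, l ≠ K → P l ∈ Set.Icc ((C m).a l) ((C m).b l) := by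
    intro m l hl
    rcases hP_ab m l hl with h | h <;> rw [h]
    · exact ⟨le_rfl, ((C m).lt l).le⟩
    · exact ⟨((C m).lt l).le, le_rfl⟩
  -- the two directions other than K
  have h2idx : ∀ K0 : Fin 3,
      ∃ l₁ l₂ : Fin 3, l₁ ≠ l₂ ∧ l₁ ≠ K0 ∧ l₂ ≠ K0 ∧ ∀ l, l ≠ K0 → l = l₁ ∨ l = l₂ := by
    decide
  obtain ⟨l₁, l₂, h12, h1K, h2K, hcov2⟩ := h2idx K
  -- if two cuboids are on the same side at direction l, they overlap there beyond P l
  have hside : ∀ m n l, l ≠ K → ((P l = (C m).a l) ↔ (P l = (C n).a l)) →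
      ∃ w, w ≠ P l ∧ w ∈ Set.Icc ((C m).a l) ((C m).b l) ∧
        w ∈ Set.Icc ((C n).a l) ((C n).b l) := by
    intro m n l hl hiff
    by_cases h : P l = (C m).a l
    · have h' := hiff.mp h
      refine ⟨min ((C m).b l) ((C n).b l), ?_, ⟨?_, min_le_left _ _⟩, ⟨?_, min_le_right _ _⟩⟩
      · exact (lt_min (by rw [h]; exact (C m).lt l) (by rw [h']; exact (C n).lt l)).ne'
      · exact le_min ((C m).lt l).le (by rw [← h, h']; exact ((C n).lt l).le)
      · exact le_min (by rw [← h', h]; exact ((C m).lt l).le) ((C n).lt l).le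
    · have hb := (hP_ab m l hl).resolve_left h
      have hb' := (hP_ab n l hl).resolve_left (fun hh => h (hiff.mpr hh))
      refine ⟨max ((C m).a l) ((C n).a l), ?_, ⟨le_max_left _ _, ?_⟩, ⟨le_max_right _ _, ?_⟩⟩
      · exact (max_lt (by rw [hb]; exact (C m).lt l) (by rw [hb']; exact (C n).lt l)).ne
      · exact max_le ((C m).lt l).le (by rw [← hb, hb']; exact ((C n).lt l).le)
      · exact max_le (by rw [← hb', hb]; exact ((C m).lt l).le) ((C n).lt l).le
  -- two cuboids on the same side in a direction ≠ K are face-neighbors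
  have hB : ∀ m n, m ≠ n → ∀ l, l ≠ K → ((P l = (C m).a l) ↔ (P l = (C n).a l)) →
      FaceNeighbors (C m) (C n) := by
    intro m n hmn l hl hiff
    obtain ⟨w, hwne, hwm, hwn⟩ := hside m n l hl hiff
    set z : Fin 3 → ℝ := fun l' => if l' = l then w else if l' = K then (C 0).a K else P l'
      with hzdef
    have hzmem : ∀ p : Fin 4, w ∈ Set.Icc ((C p).a l) ((C p).b l) → z ∈ (C p).toSet := by
      intro p hw l'
      by_cases h1 : l' = l
      · subst h1; simpa [hzdef] using hw
      · by_cases h2 : l' = K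
        · subst h2; simpa [hzdef, h1] using hcK p
        · simpa [hzdef, h1, h2] using hPIcc p l' h2
    have hzm := hzmem m hwm
    have hzn := hzmem n hwn
    have hznotE : z ∉ e := by
      intro hz
      have := hfix z hz l hl
      rw [hzdef] at this
      simp at this
      exact hwne this
    exact hnbr m n hmn (fun hs => hznotE (hs ⟨hzm, hzn⟩))
  -- no two cuboids are on the same side in both directions
  have hsame : ∀ m n, m ≠ n → ((P l₁ = (C m).a l₁) ↔ (P l₁ = (C n).a l₁)) →
      ((P l₂ = (C m).a l₂) ↔ (P l₂ = (C n).a l₂)) → False := by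
    intro m n hmn hiff1 hiff2
    obtain ⟨w₁, hw₁ne, hw₁m, hw₁n⟩ := hside m n l₁ h1K hiff1
    obtain ⟨w₂, hw₂ne, hw₂m, hw₂n⟩ := hside m n l₂ h2K hiff2
    set x : Fin 3 → ℝ := fun l => if l = l₁ then P l₁ else if l = l₂ then P l₂ else (C 0).a K
      with hxdef
    set y : Fin 3 → ℝ := fun l => if l = l₁ then w₁ else if l = l₂ then w₂ else (C 0).b K
      with hydef
    have hKnot : K ≠ l₁ ∧ K ≠ l₂ := ⟨Ne.symm h1K, Ne.symm h2K⟩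
    have hmemx : ∀ p : Fin 4, x ∈ (C p).toSet := by
      intro p l
      by_cases ha : l = l₁
      · subst ha; simpa [hxdef] using hPIcc p l h1K
      · by_cases hb : l = l₂
        · subst hb; simpa [hxdef, ha] using hPIcc p l h2K
        · have hlK : l = K := by
            by_contra hc
            rcases hcov2 l hc with h | h
            exacts [ha h, hb h]
          subst hlK
          simpa [hxdef, ha, hb] using hcK p
    have hmemy : ∀ p : Fin 4, w₁ ∈ Set.Icc ((C p).a l₁) ((C p).b l₁) →
        w₂ ∈ Set.Icc ((C p).a l₂) ((C p).b l₂) → y ∈ (C p).toSet := by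
      intro p hw1 hw2 l
      by_cases ha : l = l₁
      · subst ha; simpa [hydef] using hw1
      · by_cases hb : l = l₂
        · subst hb; simpa [hydef, ha] using hw2
        · have hlK : l = K := by
            by_contra hc
            rcases hcov2 l hc with h | h
            exacts [ha h, hb h]
          subst hlK
          simpa [hydef, ha, hb] using hdK p
    have hym := hmemy m hw₁m hw₂m
    have hyn := hmemy n hw₁n hw₂n
    have hynotE : y ∉ e := by
      intro hy
      have := hfix y hy l₁ h1K
      rw [hydef] at this
      simp at this
      exact hw₁ne this
    have hFN := hnbr m n hmn (fun hs => hynotE (hs ⟨hym, hyn⟩))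
    obtain ⟨i0, v, hv, hfaceeq⟩ := hFN.1
    have hx' : x ∈ (C m).toSet ∩ (C n).toSet := ⟨hmemx m, hmemx n⟩
    have hy' : y ∈ (C m).toSet ∩ (C n).toSet := ⟨hym, hyn⟩
    rw [hfaceeq] at hx' hy'
    have hxy : x i0 = y i0 := hx'.1.trans hy'.1.symm
    by_cases ha : i0 = l₁
    · subst ha
      rw [hxdef, hydef] at hxy
      simp at hxy
      exact hw₁ne hxy.symm
    · by_cases hb : i0 = l₂
      · subst hb
        rw [hxdef, hydef] at hxy
        simp [Ne.symm ha, ha] at hxy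
        exact hw₂ne hxy.symm
      · rw [hxdef, hydef] at hxy
        simp [ha, hb] at hxy
        exact hcd.ne hxy
  -- the side pattern map is injective, hence surjective onto Bool × Bool
  intro k
  set τ : Fin 4 → Bool × Bool :=
    fun m => (decide (P l₁ = (C m).a l₁), decide (P l₂ = (C m).a l₂)) with hτdef
  have hτinj : Function.Injective τ := by
    intro m n hmn
    by_contra hne
    have h1 : decide (P l₁ = (C m).a l₁) = decide (P l₁ = (C n).a l₁) :=
      congrArg Prod.fst hmn
    have h2 : decide (P l₂ = (C m).a l₂) = decide (P l₂ = (C n).a l₂) :=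
      congrArg Prod.snd hmn
    exact hsame m n hne (decide_eq_decide.mp h1) (decide_eq_decide.mp h2)
  have hτsurj : Function.Surjective τ := by
    have := (Fintype.bijective_iff_injective_and_card τ).mpr ⟨hτinj, by simp⟩
    exact this.2
  obtain ⟨i, hi⟩ := hτsurj (!(τ k).1, (τ k).2)
  obtain ⟨j, hj⟩ := hτsurj ((τ k).1, !(τ k).2)
  have hik : i ≠ k := by
    intro h
    have h1 : (τ i).1 = !(τ k).1 := congrArg Prod.fst hi
    rw [h] at h1
    simp at h1
  have hjk : j ≠ k := by
    intro h
    have h1 : (τ j).2 = !(τ k).2 := congrArg Prod.snd hj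
    rw [h] at h1
    simp at h1
  have hij' : i ≠ j := by
    intro h
    have : (!(τ k).1) = (τ k).1 := by
      have := hi.symm.trans (congrArg τ h) |>.trans hj
      exact congrArg Prod.fst this
    simp at this
  refine ⟨i, j, hik, hjk, hij', ?_, ?_⟩
  · refine hB k i (Ne.symm hik) l₂ h2K ?_
    have h1 : (τ i).2 = (τ k).2 := by rw [hi]
    exact (decide_eq_decide.mp h1).symm
  · refine hB k j (Ne.symm hjk) l₁ h1K ?_
    have h1 : (τ j).1 = (τ k).1 := by rw [hj]
    exact (decide_eq_decide.mp h1).symm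
end
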